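/- First-moment condition for the discrete delta function: for every grid spacing h > 0 and every point X ∈ ℝ³, the vector-valued sum over all grid points x = h·v with v ∈ ℤ³ of (x − X)·δ̂(x − X, h)·h³ equals the zero vector in ℝ³. -/

import Mathlib

/-!
The summand factorises over the coordinates: writing `r = X / h`, the `i`-th component of the
sum is `h` times a product of one-dimensional lattice sums, and the `i`-th factor is the first
moment `∑ₙ φ(n - r) (n - r)`, which vanishes for every shift `r`. Only the four nodes
`n - r ∈ {-1 - a, -a, 1 - a, 2 - a}`, `a = fract r`, contribute, and there the square roots
cancel in pairs, leaving a polynomial identity in `a`.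
-/

/-- The Peskin four-point kernel. -/
noncomputable def peskinPhi (r : ℝ) : ℝ :=
  if |r| ≤ 1 then (3 - 2 * |r| + Real.sqrt (1 + 4 * |r| - 4 * |r| ^ 2)) / 8
  else if |r| ≤ 2 then (5 - 2 * |r| - Real.sqrt (-7 + 12 * |r| - 4 * |r| ^ 2)) / 8
  else 0

/-- The smoothed Dirac delta function `δ̂(x, ω) = ω⁻³ φ(x₁/ω) φ(x₂/ω) φ(x₃/ω)`. -/
noncomputable def deltaHat (x : Fin 3 → ℝ) (ω : ℝ) : ℝ :=
  ω⁻¹ ^ 3 * (peskinPhi (x 0 / ω) * peskinPhi (x 1 / ω) * peskinPhi (x 2 / ω))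

open Finset Function

theorem peskinPhi_neg (r : ℝ) : peskinPhi (-r) = peskinPhi r := by
  simp only [peskinPhi, abs_neg]

theorem peskinPhi_of_abs_le_one {r : ℝ} (hr : |r| ≤ 1) :
    peskinPhi r = (3 - 2 * |r| + √(1 + 4 * |r| - 4 * |r| ^ 2)) / 8 :=
  if_pos hr

theorem peskinPhi_of_one_le_abs {r : ℝ} (h1 : 1 ≤ |r|) (h2 : |r| ≤ 2) :
    peskinPhi r = (5 - 2 * |r| - √(-7 + 12 * |r| - 4 * |r| ^ 2)) / 8 := by
  rcases h1.eq_or_lt with h1 | h1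
  · rw [peskinPhi_of_abs_le_one h1.ge, ← h1]
    norm_num
  · rw [peskinPhi, if_neg h1.not_ge, if_pos h2]

theorem peskinPhi_eq_zero_of_two_le_abs {r : ℝ} (hr : 2 ≤ |r|) : peskinPhi r = 0 := by
  rcases hr.eq_or_lt with hr | hr
  · rw [peskinPhi_of_one_le_abs (by linarith) hr.ge, ← hr]
    norm_num
  · rw [peskinPhi, if_neg (by linarith), if_neg hr.not_ge]

theorem support_peskinPhi_intCast_sub_subset (r : ℝ) :
    (support fun n : ℤ => peskinPhi (n - r)) ⊆ Set.Icc (⌊r⌋ - 1) (⌊r⌋ + 2) := by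
  intro n hn
  by_contra hn'
  refine hn (peskinPhi_eq_zero_of_two_le_abs ?_)
  have h₁ := Int.floor_le r
  have h₂ := Int.lt_floor_add_one r
  rcases not_and_or.mp hn' with h | h
  · have : (n : ℝ) ≤ ⌊r⌋ - 2 := by exact_mod_cast (by omega : n ≤ ⌊r⌋ - 2)
    rw [abs_sub_comm, le_abs]
    left; linarith
  · have : (⌊r⌋ : ℝ) + 3 ≤ n := by exact_mod_cast (by omega : ⌊r⌋ + 3 ≤ n)
    rw [le_abs]
    left; linarith

theorem sum_Icc_peskinPhi_mul_eq_zero {a : ℝ} (h0 : 0 ≤ a) (h1 : a < 1) :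
    ∑ n ∈ Icc (-1 : ℤ) 2, peskinPhi (n - a) * (n - a) = 0 := by
  rw [show Icc (-1 : ℤ) 2 = {-1, 0, 1, 2} by rfl, sum_insert (by decide), sum_insert (by decide),
    sum_insert (by decide), sum_singleton]
  push_cast
  have e₁ : peskinPhi (-1 - a) = (5 - 2 * (1 + a) - √(1 + 4 * a - 4 * a ^ 2)) / 8 := by
    rw [show -1 - a = -(1 + a) by ring, peskinPhi_neg, peskinPhi_of_one_le_abs
      (le_abs.mpr (.inl (by linarith))) (abs_le.mpr ⟨by linarith, by linarith⟩),
      abs_of_nonneg (by linarith)]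
    ring_nf
  have e₂ : peskinPhi (0 - a) = (3 - 2 * a + √(1 + 4 * a - 4 * a ^ 2)) / 8 := by
    rw [zero_sub, peskinPhi_neg, peskinPhi_of_abs_le_one (abs_le.mpr ⟨by linarith, h1.le⟩),
      abs_of_nonneg h0]
  have e₃ : peskinPhi (1 - a) = (3 - 2 * (1 - a) + √(1 + 4 * a - 4 * a ^ 2)) / 8 := by
    rw [peskinPhi_of_abs_le_one (abs_le.mpr ⟨by linarith, by linarith⟩),
      abs_of_nonneg (by linarith)]
    ring_nf
  have e₄ : peskinPhi (2 - a) = (5 - 2 * (2 - a) - √(1 + 4 * a - 4 * a ^ 2)) / 8 := by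
    rw [peskinPhi_of_one_le_abs (le_abs.mpr (.inl (by linarith)))
      (abs_le.mpr ⟨by linarith, by linarith⟩), abs_of_nonneg (by linarith)]
    ring_nf
  rw [e₁, e₂, e₃, e₄]
  ring

theorem tsum_peskinPhi_mul_eq_zero (r : ℝ) :
    ∑' n : ℤ, peskinPhi (n - r) * (n - r) = 0 := by
  set a := Int.fract r
  set f : ℤ → ℝ := fun k => peskinPhi (k - a) * (k - a)
  have hf : ∀ k ∉ Icc (-1 : ℤ) 2, f k = 0 := fun k hk => by
    have hsupp := support_peskinPhi_intCast_sub_subset a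
    rw [Int.floor_fract] at hsupp
    have hφ : peskinPhi (k - a) = 0 := by
      by_contra hne
      exact hk (by simpa using hsupp hne)
    simp only [f, hφ, zero_mul]
  calc ∑' n : ℤ, peskinPhi (n - r) * (n - r)
      = ∑' n : ℤ, f (Equiv.subRight ⌊r⌋ n) := tsum_congr fun n => by
        simp only [f, Equiv.subRight_apply, Int.cast_sub, a, Int.fract, sub_sub_sub_cancel_right]
    _ = ∑ k ∈ Icc (-1 : ℤ) 2, f k := (Equiv.tsum_eq _ f).trans (tsum_eq_sum hf)
    _ = 0 := sum_Icc_peskinPhi_mul_eq_zero (Int.fract_nonneg r) (Int.fract_lt_one r)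

theorem hasSum_pi_prod {ι α R : Type*} [Fintype ι] [DecidableEq ι] [CommSemiring R]
    [TopologicalSpace R] (g : ι → α → R) (hg : ∀ k, (support (g k)).Finite) :
    HasSum (fun v : ι → α => ∏ k, g k (v k)) (∏ k, ∑' a, g k a) := by
  set s : ι → Finset α := fun k => (hg k).toFinset
  have hs : ∀ k, ∀ a ∉ s k, g k a = 0 := fun k a ha => by simpa [s] using ha
  rw [Finset.prod_congr rfl fun k _ => tsum_eq_sum (hs k), prod_univ_sum]
  refine hasSum_sum_of_ne_finset_zero fun v hv => ?_
  obtain ⟨k, hk⟩ := not_forall.mp (Fintype.mem_piFinset.not.mp hv)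
  exact prod_eq_zero (mem_univ k) (hs k _ hk)

theorem hasSum_prod_smul_eq_zero_of_firstMoment {ι : Type*} [Fintype ι] [DecidableEq ι]
    (φ : ℝ → ℝ) (hsupp : ∀ r, (support fun n : ℤ => φ (n - r)).Finite)
    (hmom : ∀ r, ∑' n : ℤ, φ (n - r) * (n - r) = 0) (r : ι → ℝ) :
    HasSum (fun v : ι → ℤ => (∏ k, φ (v k - r k)) • fun k => (v k : ℝ) - r k) 0 := by
  refine Pi.hasSum.mpr fun i => ?_
  set g : ι → ℤ → ℝ := fun k n => φ (n - r k) * if k = i then (n : ℝ) - r k else 1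
  have hg : ∀ v : ι → ℤ, (∏ k, φ (v k - r k)) * ((v i : ℝ) - r i) = ∏ k, g k (v k) := by
    intro v
    simp only [g, prod_mul_distrib, prod_ite_eq', mem_univ, if_true]
  have hgi : ∑' n, g i n = 0 := by simpa [g] using hmom (r i)
  have := hasSum_pi_prod g fun k => (hsupp (r k)).subset (support_mul_subset_left _ _)
  rw [prod_eq_zero (mem_univ i) hgi] at this
  simpa only [Pi.smul_apply, smul_eq_mul, hg, Pi.zero_apply] using this

theorem deltaHat_mul_pow_smul_eq {h : ℝ} (hh : h ≠ 0) (X : Fin 3 → ℝ) (v : Fin 3 → ℤ) :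
    (deltaHat (fun i => h * (v i : ℝ) - X i) h * h ^ 3) • (fun i => h * (v i : ℝ) - X i) =
      h • ((∏ k, peskinPhi (v k - X k / h)) • fun k => (v k : ℝ) - X k / h) := by
  have hx : ∀ i, (h * (v i : ℝ) - X i) / h = v i - X i / h := fun i => by field_simp
  funext i
  simp only [deltaHat, hx, Fin.prod_univ_three, Pi.smul_apply, smul_eq_mul]
  field_simp

/-- First-moment condition for the discrete delta function: for every grid spacing
`h > 0` and every `X ∈ ℝ³`, the vector-valued sum over all grid points `x = h·v`,
`v ∈ ℤ³`, of `(x − X)·δ̂(x − X, h)·h³` equals the zero vector of `ℝ³`. -/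
theorem deltaHat_firstMoment (h : ℝ) (hh : 0 < h) (X : Fin 3 → ℝ) :
    ∑' v : Fin 3 → ℤ,
      (deltaHat (fun i => h * (v i : ℝ) - X i) h * h ^ 3) •
        (fun i => h * (v i : ℝ) - X i : Fin 3 → ℝ) = 0 := by
  simp only [deltaHat_mul_pow_smul_eq hh.ne']
  have := (hasSum_prod_smul_eq_zero_of_firstMoment peskinPhi
    (fun r => (Set.finite_Icc _ _).subset (support_peskinPhi_intCast_sub_subset r))
    tsum_peskinPhi_mul_eq_zero (fun k => X k / h)).const_smul h
  rw [this.tsum_eq, smul_zero]
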